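/- arXiv:2205.13844 — 5 statements merged into one kernel-verified Lean document; each statement's English description precedes it below -/
import Mathlib

section
/- Let $\alpha > 0$ and let $\beta:\mathbb{R}\to\mathbb{R}$ be continuous and $2\pi$-periodic with $\int_0^{2\pi}\beta(s)\,ds > 0$. Then any $2\pi$-periodic solution $x$ of $x'(t) = \alpha - \beta(t)x(t)$ satisfies for all $t$: $\frac{2\alpha\pi \exp(-\int_0^{2\pi}\beta^+(s)ds)}{1-\exp(-\int_0^{2\pi}\beta(s)ds)} \le x(t) \le \frac{2\alpha\pi \exp(\int_0^{2\pi}\beta^-(s)ds)}{1-\exp(-\int_0^{2\pi}\beta(s)ds)}$, where $\beta^+ = \max(\beta,0)$ and $\beta^- = -\min(\beta,0)$. -/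
open Real intervalIntegral
open MeasureTheory (volume)

/-!
Multiplying the equation by the integrating factor `exp (∫ₜᵘ β)` and integrating over one period
`[t - 2π, t]` gives, by periodicity of `x` and `β`, the variation-of-constants formula
`x t * (1 - exp (-∫₀^{2π} β)) = α ∫_{t-2π}^t exp (-∫ᵤᵗ β) du`.
For `u` in that window, `-∫₀^{2π} β⁺ ≤ -∫ᵤᵗ β ≤ ∫₀^{2π} β⁻`, which bounds the integrand, and the
positive mean of `β` makes the factor `1 - exp (-∫₀^{2π} β)` positive.
-/

theorem Function.Periodic.intervalIntegral_sub_period {E : Type*} [NormedAddCommGroup E]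
    [NormedSpace ℝ E] {f : ℝ → E} {T : ℝ} (hf : Function.Periodic f T) (t : ℝ) :
    ∫ s in (t - T)..t, f s = ∫ s in (0:ℝ)..T, f s := by
  simpa using hf.intervalIntegral_add_eq (t - T) 0

theorem integral_le_integral_max_zero {f : ℝ → ℝ} {a u b : ℝ} (hau : a ≤ u) (hub : u ≤ b)
    (hf : IntervalIntegrable f volume a b) :
    ∫ s in u..b, f s ≤ ∫ s in a..b, max (f s) 0 := by
  have hf' : IntervalIntegrable (fun s => max (f s) 0) volume a b :=
    ⟨hf.1.pos_part, hf.2.pos_part⟩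
  have hsub : Set.uIcc u b ⊆ Set.uIcc a b :=
    Set.uIcc_subset_uIcc_right (Set.mem_uIcc_of_le hau hub)
  calc ∫ s in u..b, f s ≤ ∫ s in u..b, max (f s) 0 :=
        integral_mono_on hub (hf.mono_set hsub) (hf'.mono_set hsub)
          fun s _ => le_max_left _ _
    _ ≤ ∫ s in a..b, max (f s) 0 :=
        integral_mono_interval hau hub le_rfl
          (Filter.Eventually.of_forall fun s => le_max_right _ _) hf'

theorem neg_integral_neg_min_zero_le_integral {f : ℝ → ℝ} {a u b : ℝ} (hau : a ≤ u)
    (hub : u ≤ b) (hf : IntervalIntegrable f volume a b) :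
    -∫ s in a..b, -min (f s) 0 ≤ ∫ s in u..b, f s := by
  have h := integral_le_integral_max_zero hau hub hf.neg
  have hmax : ∀ s, max (-f s) 0 = -min (f s) 0 := fun s => by rw [← max_neg_neg, neg_zero]
  simp only [Pi.neg_apply, hmax, integral_neg, neg_neg] at h ⊢
  linarith

theorem periodic_solution_mul_one_sub_exp_eq {α T : ℝ} {β x : ℝ → ℝ} (hβ : Continuous β)
    (hβper : Function.Periodic β T) (hxper : Function.Periodic x T)
    (hx : ∀ t, HasDerivAt x (α - β t * x t) t) (t : ℝ) :
    x t * (1 - exp (-∫ s in (0:ℝ)..T, β s)) =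
      ∫ u in (t - T)..t, α * exp (-∫ s in u..t, β s) := by
  have hderiv : ∀ u, HasDerivAt (fun u => x u * exp (∫ s in t..u, β s))
      (α * exp (∫ s in t..u, β s)) u := fun u =>
    ((hx u).mul (hβ.integral_hasStrictDerivAt t u).hasDerivAt.exp).congr_deriv (by ring)
  have hcont : Continuous fun u => α * exp (∫ s in t..u, β s) :=
    continuous_const.mul (continuous_primitive (fun _ _ => hβ.intervalIntegrable _ _) t).rexp
  have hflip : ∀ u, exp (-∫ s in u..t, β s) = exp (∫ s in t..u, β s) := fun u => by
    rw [integral_symm t u, neg_neg]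
  simp only [hflip]
  rw [integral_eq_sub_of_hasDerivAt (fun u _ => hderiv u) (hcont.intervalIntegrable _ _),
    integral_same, integral_symm (t - T) t, hβper.intervalIntegral_sub_period, hxper.sub_eq,
    exp_zero]
  ring

section IntegratingFactorBounds

variable {α a b : ℝ} {β : ℝ → ℝ}

theorem continuous_integral_lower (hβ : Continuous β) (b : ℝ) :
    Continuous fun u => ∫ s in u..b, β s :=
  (continuous_primitive (fun _ _ => hβ.intervalIntegrable _ _) b).neg.congr fun u =>
    (integral_symm b u).symm

theorem le_integral_exp_neg_integral (hα : 0 ≤ α) (hab : a ≤ b) (hβ : Continuous β) :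
    (b - a) * (α * exp (-∫ s in a..b, max (β s) 0)) ≤
      ∫ u in a..b, α * exp (-∫ s in u..b, β s) := by
  rw [← smul_eq_mul, ← integral_const]
  refine integral_mono_on hab (continuous_const.intervalIntegrable _ _)
    ((continuous_const.mul (continuous_integral_lower hβ b).neg.rexp).intervalIntegrable _ _)
    fun u hu => ?_
  gcongr
  exact integral_le_integral_max_zero hu.1 hu.2 (hβ.intervalIntegrable _ _)

theorem integral_exp_neg_integral_le (hα : 0 ≤ α) (hab : a ≤ b) (hβ : Continuous β) :
    ∫ u in a..b, α * exp (-∫ s in u..b, β s) ≤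
      (b - a) * (α * exp (∫ s in a..b, -min (β s) 0)) := by
  rw [← smul_eq_mul, ← integral_const]
  refine integral_mono_on hab
    ((continuous_const.mul (continuous_integral_lower hβ b).neg.rexp).intervalIntegrable _ _)
    (continuous_const.intervalIntegrable _ _) fun u hu => ?_
  gcongr
  exact neg_le.mp (neg_integral_neg_min_zero_le_integral hu.1 hu.2 (hβ.intervalIntegrable _ _))

end IntegratingFactorBounds

/-- Bounds for any `2π`-periodic solution of `x' = α - β(t) x`
with `α > 0` and `β` continuous, `2π`-periodic, of positive mean, in terms of
the positive part `β⁺ = max(β,0)` and negative part `β⁻ = -min(β,0)`. -/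
theorem stmt1 (α : ℝ) (hα : 0 < α) (β : ℝ → ℝ)
    (hβ : Continuous β) (hβper : Function.Periodic β (2 * π))
    (hβint : 0 < ∫ s in (0:ℝ)..(2 * π), β s)
    (x : ℝ → ℝ) (hxper : Function.Periodic x (2 * π))
    (hx : ∀ t : ℝ, HasDerivAt x (α - β t * x t) t) :
    ∀ t : ℝ,
      (2 * α * π * Real.exp (-(∫ s in (0:ℝ)..(2 * π), max (β s) 0))) /
          (1 - Real.exp (-(∫ s in (0:ℝ)..(2 * π), β s))) ≤ x t ∧
      x t ≤ (2 * α * π * Real.exp (∫ s in (0:ℝ)..(2 * π), -min (β s) 0)) /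
          (1 - Real.exp (-(∫ s in (0:ℝ)..(2 * π), β s))) := by
  intro t
  have hden : 0 < 1 - exp (-∫ s in (0:ℝ)..(2 * π), β s) := by
    rwa [sub_pos, exp_lt_one_iff, neg_lt_zero]
  have hwindow : t - 2 * π ≤ t := sub_le_self t (by positivity)
  have hpos : ∫ s in (t - 2 * π)..t, max (β s) 0 = ∫ s in (0:ℝ)..(2 * π), max (β s) 0 :=
    (hβper.comp fun y => max y 0).intervalIntegral_sub_period t
  have hneg : ∫ s in (t - 2 * π)..t, -min (β s) 0 = ∫ s in (0:ℝ)..(2 * π), -min (β s) 0 :=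
    (hβper.comp fun y => -min y 0).intervalIntegral_sub_period t
  have hsol := periodic_solution_mul_one_sub_exp_eq hβ hβper hxper hx t
  have hlow := le_integral_exp_neg_integral hα.le hwindow hβ
  have hupp := integral_exp_neg_integral_le hα.le hwindow hβ
  rw [hpos, sub_sub_cancel] at hlow
  rw [hneg, sub_sub_cancel] at hupp
  constructor
  · rw [div_le_iff₀ hden]; linarith
  · rw [le_div_iff₀ hden]; linarith
end

section
/- Consider the second-order Winfree model with inertia for $N$ oscillators: $\dot\theta^i = \omega^i$, $\dot\omega^i = -\gamma\omega^i + \nu^i - \frac{\kappa}{N}\sin\theta^i \sum_{j=1}^N(1+\cos\theta^j)$, with $\gamma>0$, $\kappa \ge 0$. Let $\omega^c_t = \frac1N\sum_i \omega^i_t$ and $\nu^c = \frac1N\sum_i \nu^i$. If $\omega^c_0 > 0$ and $\kappa < \nu^c/2$, then for all $t\ge 0$: $0 < \min\{\omega^c_0, (\nu^c - 2\kappa)/\gamma\} \le \omega^c_t \le \max\{\omega^c_0, (\nu^c+2\kappa)/\gamma\}$. -/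
/-!
Averaging the equations gives `(ω^c)' = -γ ω^c + ν^c - κ (sin θ)^c 𝓘_c(Θ)`, and since
`|(sin θ)^c| ≤ 1` and `0 ≤ 𝓘_c ≤ 2`, the coupling term lies in `[-2κ, 2κ]`. So `ω^c` solves a
linear equation `W' = -γ W + f` with forcing `f` trapped between `ν^c - 2κ` and `ν^c + 2κ`,
and with the integrating factor `exp (γ t)` the functions `exp (γ t) (W t - (ν^c ∓ 2κ)/γ)` are
monotone, which keeps `W` between its initial value and the equilibria `(ν^c ∓ 2κ)/γ`.
-/

open Real Finset

theorem min_le_of_hasDerivAt_of_le_add_mul {W W' : ℝ → ℝ} {γ a t : ℝ} (hγ : 0 < γ)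
    (hW : ∀ s, HasDerivAt W (W' s) s) (ha : ∀ s, a ≤ W' s + γ * W s) (ht : 0 ≤ t) :
    min (W 0) (a / γ) ≤ W t := by
  set b := a / γ
  have hderiv : ∀ s, HasDerivAt (fun u => exp (γ * u) * (W u - b))
      (exp (γ * s) * (W' s + γ * W s - a)) s := by
    intro s
    have hexp : HasDerivAt (fun u => exp (γ * u)) (exp (γ * s) * γ) s :=
      ((hasDerivAt_id s).const_mul γ).exp.congr_deriv (by simp)
    refine (hexp.mul ((hW s).sub_const b)).congr_deriv ?_
    have hγb : γ * b = a := mul_div_cancel₀ a hγ.ne'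
    linear_combination -exp (γ * s) * hγb
  have hmono : Monotone (fun u => exp (γ * u) * (W u - b)) :=
    monotone_of_deriv_nonneg (fun s => (hderiv s).differentiableAt) fun s => by
      rw [(hderiv s).deriv]
      exact mul_nonneg (exp_pos _).le (by linarith [ha s])
  have hgrowth := hmono ht
  simp only [mul_zero, exp_zero, one_mul] at hgrowth
  have hexp_ge : 1 ≤ exp (γ * t) := one_le_exp (by positivity)
  rcases le_or_gt b (W t) with hb | hb
  · exact (min_le_right _ _).trans hb
  · refine (min_le_left _ _).trans ?_
    nlinarith

theorem le_max_of_hasDerivAt_of_add_mul_le {W W' : ℝ → ℝ} {γ A t : ℝ} (hγ : 0 < γ)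
    (hW : ∀ s, HasDerivAt W (W' s) s) (hA : ∀ s, W' s + γ * W s ≤ A) (ht : 0 ≤ t) :
    W t ≤ max (W 0) (A / γ) := by
  have h := min_le_of_hasDerivAt_of_le_add_mul (W := -W) (W' := -W') (a := -A) hγ
    (fun s => (hW s).neg) (fun s => by simp only [Pi.neg_apply]; linarith [hA s]) ht
  rwa [Pi.neg_apply, Pi.neg_apply, neg_div, min_neg_neg, neg_le_neg_iff] at h

theorem abs_sum_sin_mul_sum_one_add_cos_le {ι : Type*} [Fintype ι] (x : ι → ℝ) :
    |(∑ i, sin (x i)) * ∑ j, (1 + cos (x j))| ≤ 2 * Fintype.card ι ^ 2 := by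
  have hsin : |∑ i, sin (x i)| ≤ Fintype.card ι := by
    calc |∑ i, sin (x i)| ≤ ∑ i, |sin (x i)| := abs_sum_le_sum_abs _ _
      _ ≤ ∑ _i : ι, (1 : ℝ) := sum_le_sum fun i _ => abs_sin_le_one _
      _ = Fintype.card ι := by simp
  have hcos_nonneg : 0 ≤ ∑ j, (1 + cos (x j)) :=
    sum_nonneg fun j _ => by linarith [neg_one_le_cos (x j)]
  have hcos_le : ∑ j, (1 + cos (x j)) ≤ 2 * Fintype.card ι := by
    calc ∑ j, (1 + cos (x j)) ≤ ∑ _j : ι, (2 : ℝ) := sum_le_sum fun j _ => by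
          linarith [cos_le_one (x j)]
      _ = 2 * Fintype.card ι := by simp [mul_comm]
  rw [abs_mul, abs_of_nonneg hcos_nonneg]
  nlinarith [abs_nonneg (∑ i, sin (x i))]

theorem hasDerivAt_winfree_mean_frequency {N : ℕ} {θ ω : Fin N → ℝ → ℝ} {ν : Fin N → ℝ}
    {γ κ s : ℝ} (hN : (N : ℝ) ≠ 0)
    (hω : ∀ i, HasDerivAt (ω i)
      (-γ * ω i s + ν i - κ / N * sin (θ i s) * ∑ j, (1 + cos (θ j s))) s) :
    HasDerivAt (fun u => (∑ i, ω i u) / N)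
      (-γ * ((∑ i, ω i s) / N) + (∑ i, ν i) / N
        - κ / N ^ 2 * ((∑ i, sin (θ i s)) * ∑ j, (1 + cos (θ j s)))) s := by
  refine ((HasDerivAt.fun_sum fun i _ => hω i).div_const (N : ℝ)).congr_deriv ?_
  rw [sum_sub_distrib, sum_add_distrib, ← mul_sum, ← sum_mul, ← mul_sum]
  field_simp

theorem stmt3_general (N : ℕ) (hN : 0 < N) (θ ω : Fin N → ℝ → ℝ) (ν : Fin N → ℝ)
    (γ κ : ℝ) (hγ : 0 < γ) (hκ : 0 ≤ κ)
    (hω : ∀ i, ∀ t : ℝ, HasDerivAt (ω i)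
      (-γ * ω i t + ν i - κ / N * Real.sin (θ i t) * ∑ j, (1 + Real.cos (θ j t))) t)
    (hωc0 : 0 < (∑ i, ω i 0) / N)
    (hκν : κ < ((∑ i, ν i) / N) / 2) :
    ∀ t : ℝ, 0 ≤ t →
      0 < min ((∑ i, ω i 0) / N) (((∑ i, ν i) / N - 2 * κ) / γ) ∧
      min ((∑ i, ω i 0) / N) (((∑ i, ν i) / N - 2 * κ) / γ) ≤ (∑ i, ω i t) / N ∧
      (∑ i, ω i t) / N ≤ max ((∑ i, ω i 0) / N) (((∑ i, ν i) / N + 2 * κ) / γ) := by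
  intro t ht
  have hNpos : (0 : ℝ) < N := Nat.cast_pos.mpr hN
  have hderiv := fun s => hasDerivAt_winfree_mean_frequency (s := s) hNpos.ne' (fun i => hω i s)
  have hcoupling : ∀ s,
      |κ / N ^ 2 * ((∑ i, sin (θ i s)) * ∑ j, (1 + cos (θ j s)))| ≤ 2 * κ := fun s => by
    have h := abs_sum_sin_mul_sum_one_add_cos_le (fun i => θ i s)
    rw [Fintype.card_fin] at h
    calc _ ≤ κ / N ^ 2 * (2 * N ^ 2) := by
          rw [abs_mul, abs_of_nonneg (by positivity)]; gcongr
      _ = 2 * κ := by field_simp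
  refine ⟨lt_min hωc0 (div_pos (by linarith) hγ), ?_, ?_⟩
  · exact min_le_of_hasDerivAt_of_le_add_mul hγ hderiv
      (fun s => by linarith [(abs_le.mp (hcoupling s)).2]) ht
  · exact le_max_of_hasDerivAt_of_add_mul_le hγ hderiv
      (fun s => by linarith [(abs_le.mp (hcoupling s)).1]) ht

/-- Uniform bounds for the average frequency `ω^c` of the
second-order Winfree model with inertia, provided `ω^c_0 > 0` and `κ < ν^c/2`. -/
theorem stmt3 (N : ℕ) (hN : 0 < N) (θ ω : Fin N → ℝ → ℝ) (ν : Fin N → ℝ)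
    (γ κ : ℝ) (hγ : 0 < γ) (hκ : 0 ≤ κ)
    (hθ : ∀ i, ∀ t : ℝ, HasDerivAt (θ i) (ω i t) t)
    (hω : ∀ i, ∀ t : ℝ, HasDerivAt (ω i)
      (-γ * ω i t + ν i - κ / N * Real.sin (θ i t) * ∑ j, (1 + Real.cos (θ j t))) t)
    (hωc0 : 0 < (∑ i, ω i 0) / N)
    (hκν : κ < ((∑ i, ν i) / N) / 2) :
    ∀ t : ℝ, 0 ≤ t →
      0 < min ((∑ i, ω i 0) / N) (((∑ i, ν i) / N - 2 * κ) / γ) ∧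
      min ((∑ i, ω i 0) / N) (((∑ i, ν i) / N - 2 * κ) / γ) ≤ (∑ i, ω i t) / N ∧
      (∑ i, ω i t) / N ≤ max ((∑ i, ω i 0) / N) (((∑ i, ν i) / N + 2 * κ) / γ) :=
  stmt3_general N hN θ ω ν γ κ hγ hκ hω hωc0 hκν
end

section
/- Under the assumptions $\omega^c_0 > 0$ and $\kappa < \nu^c/2$ for the deterministic second-order Winfree model with inertia, the average phase $t \mapsto \theta^c_t$ is strictly increasing and tends to infinity as $t \to \infty$. -/
/-!
Averaging the equations of motion, the coupling term of each oscillator is at most `2κ`, so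
`ω^c` obeys the linear differential inequality `(ω^c)' ≥ -γ ω^c + (ν^c - 2κ)`. With the
integrating factor `e^{γt}`, the function `e^{γt} (ω^c_t - (ν^c - 2κ)/γ)` is nondecreasing, which
keeps `ω^c_t ≥ min {ω^c_0, (ν^c - 2κ)/γ} > 0` for `t ≥ 0`. Since `ω^c` is the derivative of
`θ^c`, the average phase increases strictly and at least linearly.
-/

open Real Filter Finset Set

section LinearDifferentialInequality

variable {f f' : ℝ → ℝ} {γ c : ℝ}

theorem monotone_exp_mul_sub_div_of_hasDerivAt (hγ : γ ≠ 0)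
    (hf : ∀ t, HasDerivAt f (f' t) t) (hf' : ∀ t, -γ * f t + c ≤ f' t) :
    Monotone fun t => exp (γ * t) * (f t - c / γ) := by
  refine monotone_of_hasDerivAt_nonneg
    (fun t => (((hasDerivAt_id t).const_mul γ).exp.mul ((hf t).sub_const (c / γ))))
    fun t => ?_
  have hγc : γ * (c / γ) = c := mul_div_cancel₀ c hγ
  calc (0 : ℝ) ≤ exp (γ * t) * (γ * f t - c + f' t) :=
        mul_nonneg (exp_pos _).le (by linarith [hf' t])
    _ = exp (γ * t) * (γ * 1) * (f t - c / γ) + exp (γ * t) * f' t := by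
        linear_combination exp (γ * t) * hγc

theorem min_le_of_hasDerivAt_ge (hγ : 0 < γ)
    (hf : ∀ t, HasDerivAt f (f' t) t) (hf' : ∀ t, -γ * f t + c ≤ f' t) {t : ℝ} (ht : 0 ≤ t) :
    min (f 0) (c / γ) ≤ f t := by
  have hmono := monotone_exp_mul_sub_div_of_hasDerivAt hγ.ne' hf hf' ht
  simp only [mul_zero, exp_zero, one_mul] at hmono
  have he : 1 ≤ exp (γ * t) := one_le_exp (by positivity)
  rcases le_or_gt (c / γ) (f t) with h | h
  · exact (min_le_right _ _).trans h
  · refine (min_le_left _ _).trans ?_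
    nlinarith

end LinearDifferentialInequality

section LowerBoundedDerivative

variable {g g' : ℝ → ℝ} {a m : ℝ}

theorem add_mul_sub_le_of_hasDerivAt_ge (hg : ∀ t, HasDerivAt g (g' t) t)
    (hg' : ∀ t, a ≤ t → m ≤ g' t) {t : ℝ} (ht : a ≤ t) : g a + m * (t - a) ≤ g t := by
  have := (convex_Ici a).mul_sub_le_image_sub_of_le_deriv
    (fun s _ => (hg s).continuousAt.continuousWithinAt)
    (fun s _ => (hg s).differentiableAt.differentiableWithinAt)
    (fun s hs => by rw [(hg s).deriv]; exact hg' s (interior_subset hs))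
    a self_mem_Ici t ht ht
  linarith

theorem tendsto_atTop_of_hasDerivAt_ge (hm : 0 < m) (hg : ∀ t, HasDerivAt g (g' t) t)
    (hg' : ∀ t, a ≤ t → m ≤ g' t) : Tendsto g atTop atTop := by
  have hlin : Tendsto (fun t => g a + m * (t - a)) atTop atTop :=
    tendsto_atTop_add_const_left _ _
      ((tendsto_atTop_add_const_right _ _ tendsto_id).const_mul_atTop hm)
  exact tendsto_atTop_mono' atTop ((eventually_ge_atTop a).mono fun t ht =>
    add_mul_sub_le_of_hasDerivAt_ge hg hg' ht) hlin

end LowerBoundedDerivative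

theorem winfree_coupling_le {ι : Type*} [Fintype ι] {κ : ℝ} (hκ : 0 ≤ κ) (x : ι → ℝ) (i : ι) :
    κ / Fintype.card ι * sin (x i) * ∑ j, (1 + cos (x j)) ≤ 2 * κ := by
  set S := ∑ j, (1 + cos (x j))
  have hS : 0 ≤ S := sum_nonneg fun j _ => by linarith [neg_one_le_cos (x j)]
  have hS2 : S ≤ Fintype.card ι * 2 := by
    calc S ≤ ∑ _j : ι, (2 : ℝ) := sum_le_sum fun j _ => by linarith [cos_le_one (x j)]
      _ = Fintype.card ι * 2 := by simp
  rw [div_mul_eq_mul_div, div_mul_eq_mul_div]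
  refine div_le_of_le_mul₀ (Nat.cast_nonneg _) (by positivity) ?_
  calc κ * sin (x i) * S ≤ κ * S := by
        rw [mul_assoc]
        exact mul_le_mul_of_nonneg_left (mul_le_of_le_one_left hS (sin_le_one _)) hκ
    _ ≤ κ * (Fintype.card ι * 2) := by gcongr
    _ = 2 * κ * Fintype.card ι := by ring

theorem neg_mul_average_add_le_average_winfree_force {N : ℕ} {γ κ : ℝ} (hκ : 0 ≤ κ)
    (θ ω ν : Fin N → ℝ) :
    -γ * ((∑ i, ω i) / N) + ((∑ i, ν i) / N - 2 * κ) ≤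
      (∑ i, (-γ * ω i + ν i - κ / N * sin (θ i) * ∑ j, (1 + cos (θ j)))) / N := by
  have hcoupling : (∑ i, κ / N * sin (θ i) * ∑ j, (1 + cos (θ j))) / N ≤ 2 * κ := by
    refine div_le_of_le_mul₀ (Nat.cast_nonneg _) (by positivity) ?_
    calc _ ≤ ∑ _i : Fin N, 2 * κ := sum_le_sum fun i _ => by
            simpa using winfree_coupling_le hκ θ i
      _ = 2 * κ * N := by simp [mul_comm]
  rw [sum_sub_distrib, sum_add_distrib, ← mul_sum, sub_div, add_div, mul_div_assoc]
  linarith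

theorem stmt4_general (N : ℕ) (θ ω : Fin N → ℝ → ℝ) (ν : Fin N → ℝ)
    (γ κ : ℝ) (hγ : 0 < γ) (hκ : 0 ≤ κ)
    (hθ : ∀ i, ∀ t : ℝ, HasDerivAt (θ i) (ω i t) t)
    (hω : ∀ i, ∀ t : ℝ, HasDerivAt (ω i)
      (-γ * ω i t + ν i - κ / N * Real.sin (θ i t) * ∑ j, (1 + Real.cos (θ j t))) t)
    (hωc0 : 0 < (∑ i, ω i 0) / N)
    (hκν : κ < ((∑ i, ν i) / N) / 2) :
    StrictMonoOn (fun t => (∑ i, θ i t) / N) (Set.Ici (0:ℝ)) ∧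
    Tendsto (fun t => (∑ i, θ i t) / N) atTop atTop := by
  set ωc : ℝ → ℝ := fun t => (∑ i, ω i t) / N
  have hθc : ∀ t, HasDerivAt (fun t => (∑ i, θ i t) / N) (ωc t) t := fun t =>
    (HasDerivAt.fun_sum fun i _ => hθ i t).div_const N
  have hωc : ∀ t, HasDerivAt ωc ((∑ i, (-γ * ω i t + ν i
      - κ / N * sin (θ i t) * ∑ j, (1 + cos (θ j t)))) / N) t := fun t =>
    (HasDerivAt.fun_sum fun i _ => hω i t).div_const N
  have hωc_lower : ∀ t, 0 ≤ t → min (ωc 0) (((∑ i, ν i) / N - 2 * κ) / γ) ≤ ωc t :=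
    fun t => min_le_of_hasDerivAt_ge hγ hωc
      fun t => neg_mul_average_add_le_average_winfree_force hκ (θ · t) (ω · t) ν
  have hmin_pos : 0 < min (ωc 0) (((∑ i, ν i) / N - 2 * κ) / γ) :=
    lt_min hωc0 (div_pos (by linarith) hγ)
  refine ⟨strictMonoOn_of_hasDerivWithinAt_pos (convex_Ici 0)
      (fun t _ => (hθc t).continuousAt.continuousWithinAt)
      (fun t _ => (hθc t).hasDerivWithinAt) fun t ht => ?_,
    tendsto_atTop_of_hasDerivAt_ge hmin_pos hθc hωc_lower⟩
  rw [interior_Ici] at ht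
  exact hmin_pos.trans_le (hωc_lower t (le_of_lt ht))

/-- Under `ω^c_0 > 0` and `κ < ν^c/2`, the average phase
`t ↦ θ^c_t` of the second-order Winfree model with inertia is strictly
increasing (on `t ≥ 0`) and tends to infinity. -/
theorem stmt4 (N : ℕ) (hN : 0 < N) (θ ω : Fin N → ℝ → ℝ) (ν : Fin N → ℝ)
    (γ κ : ℝ) (hγ : 0 < γ) (hκ : 0 ≤ κ)
    (hθ : ∀ i, ∀ t : ℝ, HasDerivAt (θ i) (ω i t) t)
    (hω : ∀ i, ∀ t : ℝ, HasDerivAt (ω i)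
      (-γ * ω i t + ν i - κ / N * Real.sin (θ i t) * ∑ j, (1 + Real.cos (θ j t))) t)
    (hωc0 : 0 < (∑ i, ω i 0) / N)
    (hκν : κ < ((∑ i, ν i) / N) / 2) :
    StrictMonoOn (fun t => (∑ i, θ i t) / N) (Set.Ici (0:ℝ)) ∧
    Tendsto (fun t => (∑ i, θ i t) / N) atTop atTop :=
  stmt4_general N θ ω ν γ κ hγ hκ hθ hω hωc0 hκν
end

section
/- Let $(\Theta_t, \Omega_t)$ be a global smooth solution of the second-order Winfree model with inertia. Suppose there exist $T, D > 0$ with $\sup_{t\in[0,T]} \mathcal{D}(\Theta_t) \le D$, where $\mathcal{D}(x) = \max_{i,j}|x^i - x^j|$. Then $\sup_{t\in[0,T]}\mathcal{D}(\Omega_t) \le \max\{\mathcal{D}(\Omega_0), (\mathcal{D}(\nu) + 2\kappa D)/\gamma\}$. -/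
/-!
For a pair `i, j` the frequency gap `f = ωⁱ - ωʲ` solves `f' = -γ f + r` with forcing
`r = (νⁱ - νʲ) - (κ/N) (sin θⁱ - sin θʲ) ∑ₖ (1 + cos θᵏ)`. Since `sin` is 1-Lipschitz and
`0 ≤ 1 + cos ≤ 2`, the phase bound `𝒟(Θ) ≤ D` gives `|r| ≤ C := 𝒟(ν) + 2κD`. Then
`e^{γs} (f(s) - C/γ)` is nonincreasing, so `f(t) - C/γ ≤ e^{-γt} (f(0) - C/γ)` and
`f(t) ≤ max (f(0)) (C/γ)`; the same argument applied to `-f` bounds `|f(t)|`.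
-/

open Real

/-- Diameter of a vector in `ℝ^N`: `𝒟(x) = max_{i,j} |x^i - x^j|`. -/
noncomputable def vdiam {N : ℕ} (x : Fin N → ℝ) : ℝ := ⨆ i, ⨆ j, |x i - x j|

open Set

lemma le_vdiam {N : ℕ} (x : Fin N → ℝ) (i j : Fin N) : |x i - x j| ≤ vdiam x :=
  (le_ciSup (finite_range fun j => |x i - x j|).bddAbove j).trans
    (le_ciSup (finite_range fun i => ⨆ j, |x i - x j|).bddAbove i)

lemma vdiam_le {N : ℕ} [Nonempty (Fin N)] {x : Fin N → ℝ} {M : ℝ}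
    (h : ∀ i j, |x i - x j| ≤ M) : vdiam x ≤ M :=
  ciSup_le fun i => ciSup_le fun j => h i j

section LinearDecay

variable {f r : ℝ → ℝ} {γ C t : ℝ}

lemma le_max_of_hasDerivAt_neg_mul_add (hγ : 0 < γ) (ht : 0 ≤ t)
    (hf : ∀ s, HasDerivAt f (-γ * f s + r s) s) (hr : ∀ s ∈ Icc 0 t, r s ≤ C) :
    f t ≤ max (f 0) (C / γ) := by
  set h : ℝ → ℝ := fun s => exp (γ * s) * (f s - C / γ)
  have hh : ∀ s, HasDerivAt h (exp (γ * s) * (r s - C)) s := fun s => by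
    refine ((((hasDerivAt_id s).const_mul γ).exp).mul ((hf s).sub_const (C / γ))).congr_deriv ?_
    simp only [id]
    field_simp
    ring
  have hanti : AntitoneOn h (Icc 0 t) :=
    antitoneOn_of_hasDerivWithinAt_nonpos (convex_Icc 0 t)
      (fun s _ => (hh s).continuousAt.continuousWithinAt)
      (fun s _ => (hh s).hasDerivWithinAt)
      (fun s hs => mul_nonpos_of_nonneg_of_nonpos (exp_pos _).le
        (sub_nonpos.2 (hr s (interior_subset hs))))
  have hdecay : exp (γ * t) * (f t - C / γ) ≤ f 0 - C / γ := by
    simpa [h] using hanti ⟨le_rfl, ht⟩ ⟨ht, le_rfl⟩ ht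
  have hexp : 1 ≤ exp (γ * t) := one_le_exp (by positivity)
  rcases le_total (f 0) (C / γ) with h0 | h0
  · exact le_max_of_le_right (by nlinarith)
  · exact le_max_of_le_left (by nlinarith)

lemma abs_le_max_of_hasDerivAt_neg_mul_add (hγ : 0 < γ) (ht : 0 ≤ t)
    (hf : ∀ s, HasDerivAt f (-γ * f s + r s) s) (hr : ∀ s ∈ Icc 0 t, |r s| ≤ C) :
    |f t| ≤ max |f 0| (C / γ) := by
  have upper := le_max_of_hasDerivAt_neg_mul_add hγ ht hf
    fun s hs => (le_abs_self _).trans (hr s hs)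
  have lower := le_max_of_hasDerivAt_neg_mul_add (f := -f) (r := -r) hγ ht
    (fun s => (hf s).neg.congr_deriv (by simp only [Pi.neg_apply]; ring))
    fun s hs => (neg_le_abs _).trans (hr s hs)
  exact abs_le'.2 ⟨upper.trans (max_le_max_right _ (le_abs_self _)),
    lower.trans (max_le_max_right _ (neg_le_abs _))⟩

end LinearDecay

lemma abs_mean_coupling_sub_le {N : ℕ} {κ : ℝ} (hκ : 0 ≤ κ) (a b : ℝ) (φ : Fin N → ℝ) :
    |κ / N * ((sin a - sin b) * ∑ k, (1 + cos (φ k)))| ≤ 2 * κ * |a - b| := by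
  rcases N.eq_zero_or_pos with rfl | hN
  · simp only [CharP.cast_eq_zero, div_zero, zero_mul, abs_zero]
    positivity
  have hS₀ : 0 ≤ ∑ k, (1 + cos (φ k)) :=
    Finset.sum_nonneg fun k _ => by linarith [neg_one_le_cos (φ k)]
  have hS₂ : ∑ k, (1 + cos (φ k)) ≤ 2 * N := by
    simpa [mul_comm] using Finset.sum_le_card_nsmul Finset.univ (fun k => 1 + cos (φ k)) 2
      fun k _ => by linarith [cos_le_one (φ k)]
  calc |κ / N * ((sin a - sin b) * ∑ k, (1 + cos (φ k)))|
      = κ / N * (|sin a - sin b| * ∑ k, (1 + cos (φ k))) := by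
        rw [abs_mul, abs_mul, abs_of_nonneg (by positivity), abs_of_nonneg hS₀]
    _ ≤ κ / N * (|a - b| * (2 * N)) := by
        gcongr ?_ * (?_ * ?_)
        exact abs_sin_sub_sin_le a b
    _ = 2 * κ * |a - b| := by
        field_simp

theorem stmt5_general (N : ℕ) (hN : 0 < N) (θ ω : Fin N → ℝ → ℝ) (ν : Fin N → ℝ)
    (γ κ : ℝ) (hγ : 0 < γ) (hκ : 0 ≤ κ)
    (hω : ∀ i, ∀ t : ℝ, HasDerivAt (ω i)
      (-γ * ω i t + ν i - κ / N * Real.sin (θ i t) * ∑ j, (1 + Real.cos (θ j t))) t)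
    (T D : ℝ)
    (hsup : ∀ t ∈ Set.Icc (0:ℝ) T, vdiam (fun i => θ i t) ≤ D) :
    ∀ t ∈ Set.Icc (0:ℝ) T,
      vdiam (fun i => ω i t) ≤ max (vdiam (fun i => ω i 0)) ((vdiam ν + 2 * κ * D) / γ) := by
  intro t ht
  have : Nonempty (Fin N) := ⟨⟨0, hN⟩⟩
  refine vdiam_le fun i j => ?_
  set coupling : ℝ → ℝ := fun s =>
    κ / N * ((sin (θ i s) - sin (θ j s)) * ∑ k, (1 + cos (θ k s)))
  have hgap : ∀ s, HasDerivAt (fun s => ω i s - ω j s)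
      (-γ * (ω i s - ω j s) + (ν i - ν j - coupling s)) s :=
    fun s => ((hω i s).sub (hω j s)).congr_deriv (by simp only [coupling]; ring)
  have hforcing : ∀ s ∈ Icc 0 t, |ν i - ν j - coupling s| ≤ vdiam ν + 2 * κ * D := by
    intro s hs
    have hθ : |θ i s - θ j s| ≤ D :=
      (le_vdiam (fun k => θ k s) i j).trans (hsup s ⟨hs.1, hs.2.trans ht.2⟩)
    calc |ν i - ν j - coupling s| ≤ |ν i - ν j| + |coupling s| := abs_sub _ _
      _ ≤ vdiam ν + 2 * κ * D := add_le_add (le_vdiam ν i j)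
          ((abs_mean_coupling_sub_le hκ _ _ _).trans (by gcongr))
  calc |ω i t - ω j t| ≤ max |ω i 0 - ω j 0| ((vdiam ν + 2 * κ * D) / γ) :=
        abs_le_max_of_hasDerivAt_neg_mul_add hγ ht.1 hgap hforcing
    _ ≤ _ := max_le_max_right _ (le_vdiam (fun k => ω k 0) i j)

/-- If the phase diameter of a solution of the second-order
Winfree model with inertia stays below `D` on `[0,T]`, then the frequency
diameter is bounded by `max{𝒟(Ω₀), (𝒟(ν)+2κD)/γ}` on `[0,T]`. -/
theorem stmt5 (N : ℕ) (hN : 0 < N) (θ ω : Fin N → ℝ → ℝ) (ν : Fin N → ℝ)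
    (γ κ : ℝ) (hγ : 0 < γ) (hκ : 0 ≤ κ)
    (hθ : ∀ i, ∀ t : ℝ, HasDerivAt (θ i) (ω i t) t)
    (hω : ∀ i, ∀ t : ℝ, HasDerivAt (ω i)
      (-γ * ω i t + ν i - κ / N * Real.sin (θ i t) * ∑ j, (1 + Real.cos (θ j t))) t)
    (T D : ℝ) (hT : 0 < T) (hD : 0 < D)
    (hsup : ∀ t ∈ Set.Icc (0:ℝ) T, vdiam (fun i => θ i t) ≤ D) :
    ∀ t ∈ Set.Icc (0:ℝ) T,
      vdiam (fun i => ω i t) ≤ max (vdiam (fun i => ω i 0)) ((vdiam ν + 2 * κ * D) / γ) :=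
  stmt5_general N hN θ ω ν γ κ hγ hκ hω T D hsup
end

section
/- Let $\theta^1,\dots,\theta^N \in \mathbb{R}$ with $\max_{i,j}|\theta^i - \theta^j| \le D$ and let $\theta^c = \frac1N\sum_k \theta^k$, $\mathcal{I} = \frac1N\sum_k(1+\cos\theta^k)$. Then for any indices $i,j$, writing $\theta^{ij} = \theta^i - \theta^j$: $\kappa\theta^{ij}\cos\theta^c(1+\cos\theta^c) - \kappa\mathcal{I}(\sin\theta^i - \sin\theta^j) \le 3\kappa D^2$ for any $\kappa \ge 0$. -/
/-!
Every phase lies within `D` of the mean phase `θc`. Writing `A = θⁱʲ cos θc`, `B = 1 + cos θc - 𝓘`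
and `T = sin θⁱ - sin θʲ - A`, the left-hand side is `κ (A B - 𝓘 T)`. Here `|A| ≤ D`,
`|B| ≤ D` because `cos` is 1-Lipschitz and `1 + cos θc - 𝓘` is an average of
`cos θc - cos θᵏ`, `0 ≤ 𝓘 ≤ 2`, and `|T| ≤ D²` by the second-order Taylor expansion of `sin`
at `θc`, whose remainder is controlled by `|cos t - cos θc| ≤ |t - θc|`.
-/

open Real Set

lemma sum_div_card_mem_Icc {ι K : Type*} [Fintype ι] [Nonempty ι] [Field K] [LinearOrder K]
    [IsStrictOrderedRing K] {f : ι → K} {a b : K} (h : ∀ k, f k ∈ Icc a b) :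
    (∑ k, f k) / Fintype.card ι ∈ Icc a b := by
  rw [← Finset.card_univ, ← Finset.expect_eq_sum_div_card]
  exact ⟨Finset.le_expect Finset.univ_nonempty fun k _ ↦ (h k).1,
    Finset.expect_le Finset.univ_nonempty fun k _ ↦ (h k).2⟩

lemma abs_sub_sum_div_card_le {ι K : Type*} [Fintype ι] [Nonempty ι] [Field K] [LinearOrder K]
    [IsStrictOrderedRing K] {f : ι → K} {x D : K} (h : ∀ k, |x - f k| ≤ D) :
    |x - (∑ k, f k) / Fintype.card ι| ≤ D :=
  mem_Icc_iff_abs_le.2 <| sum_div_card_mem_Icc fun k ↦ mem_Icc_iff_abs_le.1 (h k)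

lemma abs_sin_sub_sin_sub_mul_cos_le_of_le {c x : ℝ} (hcx : c ≤ x) :
    |sin x - sin c - (x - c) * cos c| ≤ (x - c) ^ 2 / 2 := by
  have hremainder : sin x - sin c - (x - c) * cos c = ∫ t in c..x, (cos t - cos c) := by
    rw [intervalIntegral.integral_sub (continuous_cos.intervalIntegrable c x)
      intervalIntegrable_const, integral_cos, intervalIntegral.integral_const, smul_eq_mul]
  have hbound : |∫ t in c..x, (cos t - cos c)| ≤ ∫ t in c..x, (t - c) := by
    refine intervalIntegral.norm_integral_le_of_norm_le (f := fun t ↦ cos t - cos c) hcx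
      (Filter.Eventually.of_forall fun t ht ↦ ?_)
      ((continuous_id.sub continuous_const).intervalIntegrable c x)
    calc ‖cos t - cos c‖ ≤ |t - c| := abs_cos_sub_cos_le t c
      _ = t - c := abs_of_nonneg (by linarith [ht.1])
  have hquadratic : ∫ t in c..x, (t - c) = (x - c) ^ 2 / 2 := by
    rw [intervalIntegral.integral_sub intervalIntegral.intervalIntegrable_id
      intervalIntegrable_const, integral_id, intervalIntegral.integral_const, smul_eq_mul]
    ring
  rw [hremainder, ← hquadratic]
  exact hbound

lemma abs_sin_sub_sin_sub_mul_cos_le (c x : ℝ) :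
    |sin x - sin c - (x - c) * cos c| ≤ (x - c) ^ 2 / 2 := by
  rcases le_total c x with hcx | hxc
  · exact abs_sin_sub_sin_sub_mul_cos_le_of_le hcx
  · have h := abs_sin_sub_sin_sub_mul_cos_le_of_le (neg_le_neg hxc)
    rw [sin_neg, sin_neg, cos_neg, ← abs_neg] at h
    convert h using 2 <;> ring

lemma abs_sin_sub_sin_sub_mul_cos_le_two_point (c x y : ℝ) :
    |sin x - sin y - (x - y) * cos c| ≤ ((x - c) ^ 2 + (y - c) ^ 2) / 2 := by
  calc |sin x - sin y - (x - y) * cos c|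
      = |(sin x - sin c - (x - c) * cos c) - (sin y - sin c - (y - c) * cos c)| := by ring_nf
    _ ≤ |sin x - sin c - (x - c) * cos c| + |sin y - sin c - (y - c) * cos c| := abs_sub _ _
    _ ≤ (x - c) ^ 2 / 2 + (y - c) ^ 2 / 2 :=
        add_le_add (abs_sin_sub_sin_sub_mul_cos_le c x) (abs_sin_sub_sin_sub_mul_cos_le c y)
    _ = ((x - c) ^ 2 + (y - c) ^ 2) / 2 := by ring

theorem stmt9_general (N : ℕ) (θ : Fin N → ℝ) (D κ : ℝ)
    (hκ : 0 ≤ κ)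
    (hD : ∀ i j, |θ i - θ j| ≤ D) :
    ∀ i j : Fin N,
      κ * (θ i - θ j) * Real.cos ((∑ k, θ k) / N) * (1 + Real.cos ((∑ k, θ k) / N))
        - κ * ((∑ k, (1 + Real.cos (θ k))) / N) * (Real.sin (θ i) - Real.sin (θ j))
      ≤ 3 * κ * D ^ 2 := by
  intro i j
  have : Nonempty (Fin N) := ⟨i⟩
  set θc := (∑ k, θ k) / N
  set I := (∑ k, (1 + cos (θ k))) / N
  have hD0 : 0 ≤ D := (abs_nonneg _).trans (hD i i)
  have hclose (k : Fin N) : |θ k - θc| ≤ D := by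
    simpa using abs_sub_sum_div_card_le (hD k)
  have hA : |(θ i - θ j) * cos θc| ≤ D := by
    rw [abs_mul]
    simpa using mul_le_mul (hD i j) (abs_cos_le_one θc) (abs_nonneg _) hD0
  have hB : |1 + cos θc - I| ≤ D := by
    have hcos (k : Fin N) : |1 + cos θc - (1 + cos (θ k))| ≤ D := by
      rw [add_sub_add_left_eq_sub, abs_sub_comm]
      exact (abs_cos_sub_cos_le _ _).trans (hclose k)
    simpa using abs_sub_sum_div_card_le hcos
  have hI : |I| ≤ 2 := by
    have : I ∈ Icc 0 2 := by
      simpa using sum_div_card_mem_Icc (f := fun k ↦ 1 + cos (θ k))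
        fun k ↦ ⟨by linarith [neg_one_le_cos (θ k)], by linarith [cos_le_one (θ k)]⟩
    exact abs_le.2 ⟨by linarith [this.1], this.2⟩
  have hT : |sin (θ i) - sin (θ j) - (θ i - θ j) * cos θc| ≤ D ^ 2 := by
    have hsq (k : Fin N) : (θ k - θc) ^ 2 ≤ D ^ 2 :=
      sq_le_sq' (abs_le.1 (hclose k)).1 (abs_le.1 (hclose k)).2
    linarith [abs_sin_sub_sin_sub_mul_cos_le_two_point θc (θ i) (θ j), hsq i, hsq j]
  calc κ * (θ i - θ j) * cos θc * (1 + cos θc) - κ * I * (sin (θ i) - sin (θ j))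
      = κ * ((θ i - θ j) * cos θc * (1 + cos θc - I)
          - I * (sin (θ i) - sin (θ j) - (θ i - θ j) * cos θc)) := by ring
    _ ≤ κ * (D * D + 2 * D ^ 2) := by
        gcongr
        refine (le_abs_self _).trans <| (abs_sub _ _).trans ?_
        rw [abs_mul, abs_mul I]
        exact add_le_add (mul_le_mul hA hB (abs_nonneg _) hD0)
          (mul_le_mul hI hT (abs_nonneg _) zero_le_two)
    _ = 3 * κ * D ^ 2 := by ring

/-- Key trigonometric estimate: if `max_{i,j}|θ^i - θ^j| ≤ D`,
`θ^c` is the average phase and `𝓘 = (1/N)∑_k(1+cos θ^k)`, then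
`κ θ^{ij} cos θ^c (1+cos θ^c) - κ 𝓘 (sin θ^i - sin θ^j) ≤ 3κD²`. -/
theorem stmt9 (N : ℕ) (hN : 0 < N) (θ : Fin N → ℝ) (D κ : ℝ)
    (hκ : 0 ≤ κ)
    (hD : ∀ i j, |θ i - θ j| ≤ D) :
    ∀ i j : Fin N,
      κ * (θ i - θ j) * Real.cos ((∑ k, θ k) / N) * (1 + Real.cos ((∑ k, θ k) / N))
        - κ * ((∑ k, (1 + Real.cos (θ k))) / N) * (Real.sin (θ i) - Real.sin (θ j))
      ≤ 3 * κ * D ^ 2 :=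
  stmt9_general N θ D κ hκ hD
end
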